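/- Define ‖X‖ := |e1·‖X₁‖_V + e2·‖X₂‖_V|₃ on the free T-module M, where X = e1·X₁ + e2·X₂ and ‖·‖_V is the norm from the scalar product on V. Then ‖X‖ = ((‖X₁‖² + ‖X₂‖²)/2)^{1/2}, ‖X‖ = 0 iff X = 0, ‖X + Y‖ ≤ ‖X‖ + ‖Y‖, ‖α·X‖ = |α|·‖X‖ for α ∈ ℂ(i1), and ‖α·X‖ ≤ √2·|α|₃·‖X‖ for all α ∈ T; hence d(X,Y) = ‖X - Y‖ is a metric on M. -/

import Mathlib

/-- Bicomplex numbers `w = z1 + z2·i2` with `z1, z2 ∈ ℂ(i1)`. -/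
@[ext] structure Bc where
  z1 : ℂ
  z2 : ℂ

namespace Bc

instance : Add Bc := ⟨fun a b => ⟨a.z1 + b.z1, a.z2 + b.z2⟩⟩
instance : Mul Bc := ⟨fun a b => ⟨a.z1 * b.z1 - a.z2 * b.z2, a.z1 * b.z2 + a.z2 * b.z1⟩⟩
instance : Neg Bc := ⟨fun a => ⟨-a.z1, -a.z2⟩⟩
instance : Zero Bc := ⟨⟨0, 0⟩⟩
instance : One Bc := ⟨⟨1, 0⟩⟩

@[simp] lemma add_def (a b : Bc) : a + b = ⟨a.z1 + b.z1, a.z2 + b.z2⟩ := rfl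
@[simp] lemma mul_def (a b : Bc) :
    a * b = ⟨a.z1 * b.z1 - a.z2 * b.z2, a.z1 * b.z2 + a.z2 * b.z1⟩ := rfl
@[simp] lemma neg_def (a : Bc) : -a = ⟨-a.z1, -a.z2⟩ := rfl
@[simp] lemma zero_def : (0 : Bc) = ⟨0, 0⟩ := rfl
@[simp] lemma one_def : (1 : Bc) = ⟨1, 0⟩ := rfl

instance : CommRing Bc where
  add_assoc a b c := by ext <;> simp <;> ring
  zero_add a := by ext <;> simp
  add_zero a := by ext <;> simp
  add_comm a b := by ext <;> simp <;> ring
  mul_assoc a b c := by ext <;> simp <;> ring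
  one_mul a := by ext <;> simp
  mul_one a := by ext <;> simp
  left_distrib a b c := by ext <;> simp <;> ring
  right_distrib a b c := by ext <;> simp <;> ring
  mul_comm a b := by ext <;> simp <;> ring
  neg_add_cancel a := by ext <;> simp
  zero_mul a := by ext <;> simp
  mul_zero a := by ext <;> simp
  nsmul := nsmulRec
  zsmul := zsmulRec

/-- The embedding of `ℂ(i1)` into the bicomplex numbers. -/
def ofC (z : ℂ) : Bc := ⟨z, 0⟩

def i1 : Bc := ⟨Complex.I, 0⟩
def i2 : Bc := ⟨0, 1⟩
def j : Bc := i1 * i2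

/-- idempotent `e1 = (1+j)/2`. -/
noncomputable def e1 : Bc := ofC (1/2) * (1 + j)
/-- idempotent `e2 = (1-j)/2`. -/
noncomputable def e2 : Bc := ofC (1/2) * (1 - j)

noncomputable def conj1 (w : Bc) : Bc := ⟨(starRingEnd ℂ) w.z1, (starRingEnd ℂ) w.z2⟩
def conj2 (w : Bc) : Bc := ⟨w.z1, -w.z2⟩
noncomputable def conj3 (w : Bc) : Bc := ⟨(starRingEnd ℂ) w.z1, -((starRingEnd ℂ) w.z2)⟩

/-- first idempotent component -/
def pi1 (w : Bc) : ℂ := w.z1 - w.z2 * Complex.I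
/-- second idempotent component -/
def pi2 (w : Bc) : ℂ := w.z1 + w.z2 * Complex.I

noncomputable def mod1 (w : Bc) : ℝ := Real.sqrt ‖w.z1 ^ 2 + w.z2 ^ 2‖
noncomputable def norm3 (w : Bc) : ℝ := Real.sqrt (‖w.z1‖ ^ 2 + ‖w.z2‖ ^ 2)

end Bc


open Bc

/-- Free `Bc`-module of rank `n` with the canonical basis. -/
abbrev M (n : ℕ) := Fin n → Bc

/-- The associated complex vector space `V`: elements with coordinates in `ℂ(i1)`. -/
def Vset (n : ℕ) : Set (M n) := {X | ∀ l, (X l).z2 = 0}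

/-- First idempotent projection `P₁ : M → V`. -/
def P1 {n : ℕ} (X : M n) : M n := fun l => ofC (pi1 (X l))
/-- Second idempotent projection `P₂ : M → V`. -/
def P2 {n : ℕ} (X : M n) : M n := fun l => ofC (pi2 (X l))

/-- Norm on `V` induced by the scalar product. -/
noncomputable def nrmV {n : ℕ} (ip : M n → M n → Bc) (X : M n) : ℝ :=
  Real.sqrt ((ip X X).z1.re)

/-- Norm on `M`: `‖X‖ = |e1·‖X₁‖ + e2·‖X₂‖|₃`. -/
noncomputable def nrm {n : ℕ} (ip : M n → M n → Bc) (X : M n) : ℝ :=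
  norm3 (ofC ((nrmV ip (P1 X) : ℝ) : ℂ) * e1 + ofC ((nrmV ip (P2 X) : ℝ) : ℂ) * e2)

/-!
Since `e1·a + e2·b = (a + b)/2 + (a - b)/2 · j`, for real `a, b` its norm `|·|₃` is the root
mean square `√((a² + b²)/2)`; so `‖X‖` is the root mean square of the `V`-norms of the
idempotent components `P₁X, P₂X`. These components are additive and turn `α·` into
multiplication by the complex numbers `π₁ α, π₂ α`, with `|π₁ α|² + |π₂ α|² = 2|α|₃²`.
Everything therefore reduces to the seminorm `√(Re ⟨X, X⟩)`: hyperbolic positivity makes the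
real symmetric form `Re ⟨·, ·⟩` positive semidefinite, and its Cauchy–Schwarz inequality
gives the triangle inequality.
-/

namespace Bc

@[simp] lemma ofC_z1 (z : ℂ) : (ofC z).z1 = z := rfl
@[simp] lemma ofC_z2 (z : ℂ) : (ofC z).z2 = 0 := rfl

lemma ofC_add (a b : ℂ) : ofC (a + b) = ofC a + ofC b := by
  ext <;> simp

lemma ofC_mul (a b : ℂ) : ofC (a * b) = ofC a * ofC b := by
  ext <;> simp

lemma ofC_one : ofC 1 = 1 := rfl

lemma ofC_neg_one : ofC (-1) = -1 := by
  ext <;> simp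

lemma ofC_mul_e1_add_ofC_mul_e2 (a b : ℂ) :
    ofC a * e1 + ofC b * e2 = ⟨(a + b) / 2, (a - b) / 2 * Complex.I⟩ := by
  ext <;> simp [e1, e2, ofC, j, i1, i2, sub_eq_add_neg] <;> ring

lemma norm3_ofReal_mul_e1_add_ofReal_mul_e2 (a b : ℝ) :
    norm3 (ofC a * e1 + ofC b * e2) = √((a ^ 2 + b ^ 2) / 2) := by
  rw [ofC_mul_e1_add_ofC_mul_e2, norm3]
  congr 1
  simp only [← Complex.ofReal_add, ← Complex.ofReal_sub, ← Complex.ofReal_ofNat,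
    ← Complex.ofReal_div, norm_mul, Complex.norm_real, Complex.norm_I, Real.norm_eq_abs,
    mul_one, sq_abs]
  ring

lemma re_z1_ofReal_mul_e1_add_ofReal_mul_e2 (a b : ℝ) :
    (ofC a * e1 + ofC b * e2).z1.re = (a + b) / 2 := by
  rw [ofC_mul_e1_add_ofC_mul_e2]
  simp

lemma conj3_add (v w : Bc) : conj3 (v + w) = conj3 v + conj3 w := by
  ext <;> simp [conj3, add_comm]

lemma conj3_mul (v w : Bc) : conj3 (v * w) = conj3 v * conj3 w := by
  ext <;> simp [conj3, add_comm]

lemma conj3_ofC (z : ℂ) : conj3 (ofC z) = ofC (starRingEnd ℂ z) := by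
  ext <;> simp [conj3]

lemma pi1_add (v w : Bc) : pi1 (v + w) = pi1 v + pi1 w := by
  simp only [add_def, pi1]
  ring

lemma pi2_add (v w : Bc) : pi2 (v + w) = pi2 v + pi2 w := by
  simp only [add_def, pi2]
  ring

lemma pi1_mul (v w : Bc) : pi1 (v * w) = pi1 v * pi1 w := by
  simp only [mul_def, pi1]
  linear_combination (-(v.z2 * w.z2)) * Complex.I_sq

lemma pi2_mul (v w : Bc) : pi2 (v * w) = pi2 v * pi2 w := by
  simp only [mul_def, pi2]
  linear_combination (-(v.z2 * w.z2)) * Complex.I_sq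

@[simp] lemma pi1_ofC (z : ℂ) : pi1 (ofC z) = z := by simp [pi1]
@[simp] lemma pi2_ofC (z : ℂ) : pi2 (ofC z) = z := by simp [pi2]

lemma sq_norm_pi1_add_sq_norm_pi2 (w : Bc) :
    ‖pi1 w‖ ^ 2 + ‖pi2 w‖ ^ 2 = 2 * (‖w.z1‖ ^ 2 + ‖w.z2‖ ^ 2) := by
  simp only [Complex.sq_norm, Complex.normSq_apply, pi1, pi2, Complex.sub_re, Complex.sub_im,
    Complex.add_re, Complex.add_im, Complex.mul_re, Complex.mul_im, Complex.I_re, Complex.I_im]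
  ring

end Bc

noncomputable def rms (a b : ℝ) : ℝ := √((a ^ 2 + b ^ 2) / 2)

lemma rms_nonneg (a b : ℝ) : 0 ≤ rms a b := Real.sqrt_nonneg _

lemma rms_eq_zero_iff {a b : ℝ} : rms a b = 0 ↔ a = 0 ∧ b = 0 := by
  rw [rms, Real.sqrt_eq_zero (by positivity)]
  constructor
  · intro h
    exact ⟨by nlinarith [sq_nonneg a, sq_nonneg b], by nlinarith [sq_nonneg a, sq_nonneg b]⟩
  · rintro ⟨rfl, rfl⟩
    norm_num

lemma rms_eq_norm_div_sqrt_two (a b : ℝ) : rms a b = ‖(⟨a, b⟩ : ℂ)‖ / √2 := by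
  rw [rms, Complex.norm_eq_sqrt_sq_add_sq, Real.sqrt_div' _ zero_le_two]

lemma rms_add_le (a b c d : ℝ) : rms (a + c) (b + d) ≤ rms a b + rms c d := by
  simp only [rms_eq_norm_div_sqrt_two, ← add_div]
  gcongr
  exact norm_add_le (⟨a, b⟩ : ℂ) ⟨c, d⟩

lemma rms_le_rms {a b c d : ℝ} (ha : 0 ≤ a) (hb : 0 ≤ b) (hac : a ≤ c) (hbd : b ≤ d) :
    rms a b ≤ rms c d := by
  unfold rms
  gcongr

lemma rms_mul_mul (c a b : ℝ) : rms (c * a) (c * b) = |c| * rms a b := by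
  rw [rms, rms, ← Real.sqrt_sq_eq_abs, ← Real.sqrt_mul (sq_nonneg c)]
  ring_nf

lemma rms_mul_mul_le (c d a b : ℝ) : rms (c * a) (d * b) ≤ √(c ^ 2 + d ^ 2) * rms a b := by
  rw [rms, rms, ← Real.sqrt_mul (by positivity)]
  apply Real.sqrt_le_sqrt
  nlinarith [mul_nonneg (sq_nonneg c) (sq_nonneg b), mul_nonneg (sq_nonneg d) (sq_nonneg a)]

section Projections

variable {n : ℕ}

lemma P1_add (X Y : M n) : P1 (X + Y) = P1 X + P1 Y :=
  funext fun l => (congrArg ofC (pi1_add (X l) (Y l))).trans (ofC_add _ _)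

lemma P2_add (X Y : M n) : P2 (X + Y) = P2 X + P2 Y :=
  funext fun l => (congrArg ofC (pi2_add (X l) (Y l))).trans (ofC_add _ _)

lemma P1_smul (α : Bc) (X : M n) : P1 (α • X) = ofC (pi1 α) • P1 X :=
  funext fun l => (congrArg ofC (pi1_mul α (X l))).trans (ofC_mul _ _)

lemma P2_smul (α : Bc) (X : M n) : P2 (α • X) = ofC (pi2 α) • P2 X :=
  funext fun l => (congrArg ofC (pi2_mul α (X l))).trans (ofC_mul _ _)

lemma P1_eq_zero_and_P2_eq_zero_iff {X : M n} : P1 X = 0 ∧ P2 X = 0 ↔ X = 0 := by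
  constructor
  · rintro ⟨h1, h2⟩
    funext l
    have h1l : (X l).z1 - (X l).z2 * Complex.I = 0 := congrArg Bc.z1 (congrFun h1 l)
    have h2l : (X l).z1 + (X l).z2 * Complex.I = 0 := congrArg Bc.z1 (congrFun h2 l)
    have hz2 : (X l).z2 = 0 := by
      simpa [Complex.I_ne_zero] using (by linear_combination h2l - h1l :
        2 * (X l).z2 * Complex.I = 0)
    have hz1 : (X l).z1 = 0 := by linear_combination (h1l + h2l) / 2
    ext <;> simp [hz1, hz2]
  · rintro rfl
    constructor <;> funext l <;> ext <;> simp [P1, P2, pi1, pi2]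

end Projections

section ScalarProduct

variable {n : ℕ} {ip : M n → M n → Bc}

lemma ip_add_left (h_add : ∀ X Y₁ Y₂ : M n, ip X (Y₁ + Y₂) = ip X Y₁ + ip X Y₂)
    (h_conj : ∀ X Y : M n, ip X Y = conj3 (ip Y X)) (X Y Z : M n) :
    ip (X + Y) Z = ip X Z + ip Y Z := by
  rw [h_conj, h_add, conj3_add, ← h_conj, ← h_conj]

lemma ip_smul_left (h_smul : ∀ (α : Bc) (X Y : M n), ip X (α • Y) = α * ip X Y)
    (h_conj : ∀ X Y : M n, ip X Y = conj3 (ip Y X)) (α : Bc) (X Y : M n) :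
    ip (α • X) Y = conj3 α * ip X Y := by
  rw [h_conj, h_smul, conj3_mul, ← h_conj]

lemma re_ip_comm (h_conj : ∀ X Y : M n, ip X Y = conj3 (ip Y X)) (X Y : M n) :
    (ip Y X).z1.re = (ip X Y).z1.re := by
  rw [h_conj X Y]
  simp [conj3]

lemma re_ip_add_ofC_smul_self (h_add : ∀ X Y₁ Y₂ : M n, ip X (Y₁ + Y₂) = ip X Y₁ + ip X Y₂)
    (h_smul : ∀ (α : Bc) (X Y : M n), ip X (α • Y) = α * ip X Y)
    (h_conj : ∀ X Y : M n, ip X Y = conj3 (ip Y X)) (t : ℝ) (X Y : M n) :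
    (ip (X + ofC t • Y) (X + ofC t • Y)).z1.re =
      (ip X X).z1.re + 2 * t * (ip X Y).z1.re + t ^ 2 * (ip Y Y).z1.re := by
  rw [ip_add_left h_add h_conj, h_add, h_add, ip_smul_left h_smul h_conj,
    ip_smul_left h_smul h_conj, h_smul, h_smul, conj3_ofC, Complex.conj_ofReal]
  simp only [add_def, mul_def, ofC_z1, ofC_z2, zero_mul, sub_zero, Complex.add_re,
    Complex.re_ofReal_mul]
  rw [re_ip_comm h_conj X Y]
  ring

lemma re_ip_self_nonneg (h_pos : ∀ X : M n, ∃ a b : ℝ, 0 ≤ a ∧ 0 ≤ b ∧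
      ip X X = ofC (a : ℂ) * e1 + ofC (b : ℂ) * e2) (X : M n) :
    0 ≤ (ip X X).z1.re := by
  obtain ⟨a, b, ha, hb, hab⟩ := h_pos X
  rw [hab, re_z1_ofReal_mul_e1_add_ofReal_mul_e2]
  positivity

lemma nrmV_nonneg (X : M n) : 0 ≤ nrmV ip X := Real.sqrt_nonneg _

lemma nrmV_sq (h_pos : ∀ X : M n, ∃ a b : ℝ, 0 ≤ a ∧ 0 ≤ b ∧
      ip X X = ofC (a : ℂ) * e1 + ofC (b : ℂ) * e2) (X : M n) :
    nrmV ip X ^ 2 = (ip X X).z1.re :=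
  Real.sq_sqrt (re_ip_self_nonneg h_pos X)

lemma nrmV_eq_zero_iff (h_def : ∀ X : M n, ip X X = 0 ↔ X = 0)
    (h_pos : ∀ X : M n, ∃ a b : ℝ, 0 ≤ a ∧ 0 ≤ b ∧
      ip X X = ofC (a : ℂ) * e1 + ofC (b : ℂ) * e2) (X : M n) :
    nrmV ip X = 0 ↔ X = 0 := by
  obtain ⟨a, b, ha, hb, hab⟩ := h_pos X
  rw [nrmV, Real.sqrt_eq_zero (re_ip_self_nonneg h_pos X), ← h_def, hab,
    re_z1_ofReal_mul_e1_add_ofReal_mul_e2]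
  constructor
  · intro h
    obtain rfl : a = 0 := by linarith
    obtain rfl : b = 0 := by linarith
    ext <;> simp [ofC]
  · intro h
    rw [← re_z1_ofReal_mul_e1_add_ofReal_mul_e2, h]
    rfl

lemma re_ip_le_nrmV_mul_nrmV (h_add : ∀ X Y₁ Y₂ : M n, ip X (Y₁ + Y₂) = ip X Y₁ + ip X Y₂)
    (h_smul : ∀ (α : Bc) (X Y : M n), ip X (α • Y) = α * ip X Y)
    (h_conj : ∀ X Y : M n, ip X Y = conj3 (ip Y X))
    (h_pos : ∀ X : M n, ∃ a b : ℝ, 0 ≤ a ∧ 0 ≤ b ∧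
      ip X X = ofC (a : ℂ) * e1 + ofC (b : ℂ) * e2) (X Y : M n) :
    (ip X Y).z1.re ≤ nrmV ip X * nrmV ip Y := by
  have hquad : ∀ t : ℝ,
      0 ≤ nrmV ip Y ^ 2 * (t * t) + 2 * (ip X Y).z1.re * t + nrmV ip X ^ 2 := by
    intro t
    have := re_ip_self_nonneg h_pos (X + ofC t • Y)
    rw [re_ip_add_ofC_smul_self h_add h_smul h_conj] at this
    rw [nrmV_sq h_pos, nrmV_sq h_pos]
    linarith
  have hdiscr := discrim_le_zero hquad
  rw [discrim] at hdiscr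
  refine le_of_sq_le_sq ?_ (mul_nonneg (nrmV_nonneg X) (nrmV_nonneg Y))
  nlinarith

lemma nrmV_add_le (h_add : ∀ X Y₁ Y₂ : M n, ip X (Y₁ + Y₂) = ip X Y₁ + ip X Y₂)
    (h_smul : ∀ (α : Bc) (X Y : M n), ip X (α • Y) = α * ip X Y)
    (h_conj : ∀ X Y : M n, ip X Y = conj3 (ip Y X))
    (h_pos : ∀ X : M n, ∃ a b : ℝ, 0 ≤ a ∧ 0 ≤ b ∧
      ip X X = ofC (a : ℂ) * e1 + ofC (b : ℂ) * e2) (X Y : M n) :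
    nrmV ip (X + Y) ≤ nrmV ip X + nrmV ip Y := by
  have hexpand : nrmV ip (X + Y) ^ 2 = nrmV ip X ^ 2 + 2 * (ip X Y).z1.re + nrmV ip Y ^ 2 := by
    have h := re_ip_add_ofC_smul_self h_add h_smul h_conj 1 X Y
    rw [Complex.ofReal_one, ofC_one, one_smul, one_pow, one_mul, mul_one] at h
    rw [nrmV_sq h_pos, nrmV_sq h_pos, nrmV_sq h_pos, h]
  refine le_of_sq_le_sq ?_ (add_nonneg (nrmV_nonneg X) (nrmV_nonneg Y))
  nlinarith [re_ip_le_nrmV_mul_nrmV h_add h_smul h_conj h_pos X Y]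

lemma nrmV_ofC_smul (h_smul : ∀ (α : Bc) (X Y : M n), ip X (α • Y) = α * ip X Y)
    (h_conj : ∀ X Y : M n, ip X Y = conj3 (ip Y X)) (a : ℂ) (X : M n) :
    nrmV ip (ofC a • X) = ‖a‖ * nrmV ip X := by
  have hip : ip (ofC a • X) (ofC a • X) = ofC (Complex.normSq a : ℂ) * ip X X := by
    rw [h_smul, ip_smul_left h_smul h_conj, conj3_ofC, ← mul_assoc, ← ofC_mul,
      Complex.mul_conj]
  rw [nrmV, nrmV, hip, Complex.norm_def, ← Real.sqrt_mul (Complex.normSq_nonneg a)]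
  simp

lemma nrm_eq_rms (X : M n) : nrm ip X = rms (nrmV ip (P1 X)) (nrmV ip (P2 X)) :=
  norm3_ofReal_mul_e1_add_ofReal_mul_e2 _ _

lemma nrm_nonneg (X : M n) : 0 ≤ nrm ip X := by
  rw [nrm_eq_rms]
  exact rms_nonneg _ _

lemma nrm_eq_zero_iff (h_def : ∀ X : M n, ip X X = 0 ↔ X = 0)
    (h_pos : ∀ X : M n, ∃ a b : ℝ, 0 ≤ a ∧ 0 ≤ b ∧
      ip X X = ofC (a : ℂ) * e1 + ofC (b : ℂ) * e2) (X : M n) :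
    nrm ip X = 0 ↔ X = 0 := by
  rw [nrm_eq_rms, rms_eq_zero_iff, nrmV_eq_zero_iff h_def h_pos,
    nrmV_eq_zero_iff h_def h_pos, P1_eq_zero_and_P2_eq_zero_iff]

lemma nrm_add_le (h_add : ∀ X Y₁ Y₂ : M n, ip X (Y₁ + Y₂) = ip X Y₁ + ip X Y₂)
    (h_smul : ∀ (α : Bc) (X Y : M n), ip X (α • Y) = α * ip X Y)
    (h_conj : ∀ X Y : M n, ip X Y = conj3 (ip Y X))
    (h_pos : ∀ X : M n, ∃ a b : ℝ, 0 ≤ a ∧ 0 ≤ b ∧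
      ip X X = ofC (a : ℂ) * e1 + ofC (b : ℂ) * e2) (X Y : M n) :
    nrm ip (X + Y) ≤ nrm ip X + nrm ip Y := by
  simp only [nrm_eq_rms, P1_add, P2_add]
  calc rms (nrmV ip (P1 X + P1 Y)) (nrmV ip (P2 X + P2 Y))
      ≤ rms (nrmV ip (P1 X) + nrmV ip (P1 Y)) (nrmV ip (P2 X) + nrmV ip (P2 Y)) :=
        rms_le_rms (nrmV_nonneg _) (nrmV_nonneg _)
          (nrmV_add_le h_add h_smul h_conj h_pos _ _) (nrmV_add_le h_add h_smul h_conj h_pos _ _)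
    _ ≤ _ := rms_add_le _ _ _ _

lemma nrm_ofC_smul (h_smul : ∀ (α : Bc) (X Y : M n), ip X (α • Y) = α * ip X Y)
    (h_conj : ∀ X Y : M n, ip X Y = conj3 (ip Y X)) (a : ℂ) (X : M n) :
    nrm ip (ofC a • X) = ‖a‖ * nrm ip X := by
  rw [nrm_eq_rms, nrm_eq_rms, P1_smul, P2_smul, pi1_ofC, pi2_ofC,
    nrmV_ofC_smul h_smul h_conj, nrmV_ofC_smul h_smul h_conj, rms_mul_mul, abs_norm]

lemma nrm_smul_le (h_smul : ∀ (α : Bc) (X Y : M n), ip X (α • Y) = α * ip X Y)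
    (h_conj : ∀ X Y : M n, ip X Y = conj3 (ip Y X)) (α : Bc) (X : M n) :
    nrm ip (α • X) ≤ √2 * norm3 α * nrm ip X := by
  have hα : √(‖pi1 α‖ ^ 2 + ‖pi2 α‖ ^ 2) = √2 * norm3 α := by
    rw [sq_norm_pi1_add_sq_norm_pi2, Real.sqrt_mul zero_le_two, norm3]
  rw [nrm_eq_rms, nrm_eq_rms, P1_smul, P2_smul, nrmV_ofC_smul h_smul h_conj,
    nrmV_ofC_smul h_smul h_conj, ← hα]
  exact rms_mul_mul_le _ _ _ _

lemma nrm_neg (h_smul : ∀ (α : Bc) (X Y : M n), ip X (α • Y) = α * ip X Y)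
    (h_conj : ∀ X Y : M n, ip X Y = conj3 (ip Y X)) (X : M n) :
    nrm ip (-X) = nrm ip X := by
  rw [← neg_one_smul Bc X, ← ofC_neg_one, nrm_ofC_smul h_smul h_conj, norm_neg, norm_one,
    one_mul]

end ScalarProduct

theorem norm_on_M_properties_general (n : ℕ) (ip : M n → M n → Bc)
    (h_add : ∀ X Y₁ Y₂ : M n, ip X (Y₁ + Y₂) = ip X Y₁ + ip X Y₂)
    (h_smul : ∀ (α : Bc) (X Y : M n), ip X (α • Y) = α * ip X Y)
    (h_conj : ∀ X Y : M n, ip X Y = conj3 (ip Y X))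
    (h_def : ∀ X : M n, ip X X = 0 ↔ X = 0)
    (h_pos : ∀ X : M n, ∃ a b : ℝ, 0 ≤ a ∧ 0 ≤ b ∧
      ip X X = ofC (a : ℂ) * e1 + ofC (b : ℂ) * e2) :
    (∀ X : M n, nrm ip X =
        Real.sqrt ((nrmV ip (P1 X) ^ 2 + nrmV ip (P2 X) ^ 2) / 2)) ∧
    (∀ X : M n, 0 ≤ nrm ip X) ∧
    (∀ X : M n, nrm ip X = 0 ↔ X = 0) ∧
    (∀ X Y : M n, nrm ip (X + Y) ≤ nrm ip X + nrm ip Y) ∧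
    (∀ (a : ℂ) (X : M n), nrm ip (ofC a • X) = ‖a‖ * nrm ip X) ∧
    (∀ (α : Bc) (X : M n), nrm ip (α • X) ≤ Real.sqrt 2 * norm3 α * nrm ip X) ∧
    (∀ X Y : M n, (nrm ip (X - Y) = 0 ↔ X = Y)) ∧
    (∀ X Y : M n, nrm ip (X - Y) = nrm ip (Y - X)) ∧
    (∀ X Y Z : M n, nrm ip (X - Z) ≤ nrm ip (X - Y) + nrm ip (Y - Z)) := by
  have h_zero := nrm_eq_zero_iff h_def h_pos
  have h_triangle := nrm_add_le h_add h_smul h_conj h_pos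
  refine ⟨nrm_eq_rms, nrm_nonneg, h_zero, h_triangle, nrm_ofC_smul h_smul h_conj,
    nrm_smul_le h_smul h_conj, fun X Y => ?_, fun X Y => ?_, fun X Y Z => ?_⟩
  · rw [h_zero, sub_eq_zero]
  · rw [← neg_sub, nrm_neg h_smul h_conj]
  · simpa only [sub_add_sub_cancel] using h_triangle (X - Y) (Y - Z)

/-- Properties of the norm `‖X‖ = |e1‖X₁‖ + e2‖X₂‖|₃` on `M`, making `M` a metric
space with `d(X,Y) = ‖X - Y‖`. -/
theorem norm_on_M_properties (n : ℕ) (ip : M n → M n → Bc)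
    (h_add : ∀ X Y₁ Y₂ : M n, ip X (Y₁ + Y₂) = ip X Y₁ + ip X Y₂)
    (h_smul : ∀ (α : Bc) (X Y : M n), ip X (α • Y) = α * ip X Y)
    (h_conj : ∀ X Y : M n, ip X Y = conj3 (ip Y X))
    (h_def : ∀ X : M n, ip X X = 0 ↔ X = 0)
    (h_closed : ∀ X Y : M n, X ∈ Vset n → Y ∈ Vset n → (ip X Y).z2 = 0)
    (h_pos : ∀ X : M n, ∃ a b : ℝ, 0 ≤ a ∧ 0 ≤ b ∧
      ip X X = ofC (a : ℂ) * e1 + ofC (b : ℂ) * e2) :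
    (∀ X : M n, nrm ip X =
        Real.sqrt ((nrmV ip (P1 X) ^ 2 + nrmV ip (P2 X) ^ 2) / 2)) ∧
    (∀ X : M n, 0 ≤ nrm ip X) ∧
    (∀ X : M n, nrm ip X = 0 ↔ X = 0) ∧
    (∀ X Y : M n, nrm ip (X + Y) ≤ nrm ip X + nrm ip Y) ∧
    (∀ (a : ℂ) (X : M n), nrm ip (ofC a • X) = ‖a‖ * nrm ip X) ∧
    (∀ (α : Bc) (X : M n), nrm ip (α • X) ≤ Real.sqrt 2 * norm3 α * nrm ip X) ∧
    (∀ X Y : M n, (nrm ip (X - Y) = 0 ↔ X = Y)) ∧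
    (∀ X Y : M n, nrm ip (X - Y) = nrm ip (Y - X)) ∧
    (∀ X Y Z : M n, nrm ip (X - Z) ≤ nrm ip (X - Y) + nrm ip (Y - Z)) :=
  norm_on_M_properties_general n ip h_add h_smul h_conj h_def h_pos
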